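/- Let I be a small monoidal category, C a tensor category over an algebraically closed field k, and F, G : I → C strong monoidal functors. Then the set Nat_⊗(F, G) of monoidal natural transformations F → G is a linearly independent subset of the k-vector space Nat(F, G) of all natural transformations F → G. -/

import Mathlib

open CategoryTheory CategoryTheory.MonoidalCategory CategoryTheory.Limits

/-!
Artin's proof of Dedekind's independence of characters. For monoidal `τᵢ`, a relation
`∑ aᵢ τᵢ = 0` evaluated at `X ⊗ Y` gives `∑ aᵢ τᵢ(X) ⊗ τᵢ(Y) = 0`. In a rigid category over an
algebraically closed field the map `Hom(A, A') ⊗ₖ Hom(B, D) → Hom(A ⊗ B, A' ⊗ D)` is injective: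
duality reduces it to `A = 𝟙`, and linearly independent `uⱼ : 𝟙 ⟶ U` assemble to a monomorphism
`⨁ 𝟙 ⟶ U` because `𝟙` is simple with `End 𝟙 = k`. So a functional `φ` on the first factor
turns the relation into `∑ aᵢ φ(τᵢ(X)) τᵢ = 0`; subtracting `φ(τⱼ(X))` times the original one
gives a shorter relation, and induction on the length shows that all `τᵢ` with nonzero
coefficient coincide. Finally, a monoidal `τ` is nonzero since `τ(𝟙)` is invertible.
-/

theorem linearIndependent_of_mul_stable_relations {k V ι κ : Type*} [Field k] [AddCommGroup V]
    [Module k V] (v : ι → V) (χ : κ → V → k) (hne : ∀ i, v i ≠ 0)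
    (hsep : ∀ i j, (∀ c, χ c (v i) = χ c (v j)) → i = j)
    (hmul : ∀ (s : Finset ι) (a : ι → k), ∑ i ∈ s, a i • v i = 0 →
      ∀ c, ∑ i ∈ s, (a i * χ c (v i)) • v i = 0) :
    LinearIndependent k v := by
  classical
  rw [linearIndependent_iff']
  intro s
  induction s using Finset.strongInduction with
  | H s ih =>
    intro a hrel j hj
    have hother : ∀ i ∈ s, i ≠ j → a i = 0 := by
      intro i hi hij
      by_contra ha
      refine hij (hsep i j fun c => ?_)
      let b : ι → k := fun i => a i * (χ c (v i) - χ c (v j))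
      have hb : ∑ i ∈ s.erase j, b i • v i = 0 := by
        rw [Finset.sum_erase _ (by simp [b])]
        calc ∑ i ∈ s, b i • v i
            = ∑ i ∈ s, (a i * χ c (v i)) • v i - χ c (v j) • ∑ i ∈ s, a i • v i := by
              rw [Finset.smul_sum, ← Finset.sum_sub_distrib]
              refine Finset.sum_congr rfl fun i _ => ?_
              rw [smul_smul, ← sub_smul, mul_comm (χ c (v j)), ← mul_sub]
          _ = 0 := by rw [hmul s a hrel c, hrel, smul_zero, sub_zero]
      have := ih _ (Finset.erase_ssubset hj) b hb i (Finset.mem_erase.2 ⟨hij, hi⟩)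
      simpa [b, ha, sub_eq_zero] using this
    have hsingle : a j • v j = 0 := by
      rw [← hrel, Finset.sum_eq_single_of_mem j hj fun i hi hij => by simp [hother i hi hij]]
    exact (smul_eq_zero.1 hsingle).resolve_right (hne j)

namespace CategoryTheory

section Simple

attribute [local instance] Abelian.hasFiniteBiproducts

variable (k : Type*) [Field k] [IsAlgClosed k] {C : Type*} [Category C] [Abelian C] [Linear k C]

theorem eq_zero_of_comp_biproduct_desc_eq_zero {X U : C} [Simple X]
    [FiniteDimensional k (X ⟶ X)] {ι : Type} [Fintype ι] {u : ι → (X ⟶ U)}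
    (hu : LinearIndependent k u) {w : X ⟶ ⨁ fun _ : ι => X} (hw : w ≫ biproduct.desc u = 0) :
    w = 0 := by
  choose c hc using fun j => endomorphism_simple_eq_smul_id k (w ≫ biproduct.π _ j)
  have hrel : ∑ j, c j • u j = 0 := by
    rw [← hw, biproduct.desc_eq, Preadditive.comp_sum]
    refine Finset.sum_congr rfl fun j _ => ?_
    rw [← Category.assoc, ← hc j, Linear.smul_comp, Category.id_comp]
  have hc0 := Fintype.linearIndependent_iff.1 hu c hrel
  ext j
  simp [← hc j, hc0 j]

theorem mono_biproduct_desc_of_linearIndependent [∀ X : C, IsArtinianObject X] {X U : C}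
    [Simple X] [FiniteDimensional k (X ⟶ X)] {ι : Type} [Fintype ι] {u : ι → (X ⟶ U)}
    (hu : LinearIndependent k u) : Mono (biproduct.desc u) := by
  refine Abelian.mono_of_kernel_ι_eq_zero _ (by_contra fun hne => ?_)
  have hK : ¬IsZero (kernel (biproduct.desc u)) := fun h => hne (h.eq_of_src _ _)
  let s := simpleSubobjectArrow hK ≫ kernel.ι (biproduct.desc u)
  obtain ⟨j, hj⟩ : ∃ j, s ≫ biproduct.π _ j ≠ 0 := by
    by_contra! h
    have hs : Mono s := inferInstance
    rw [biproduct.hom_ext s 0 (by simpa using h)] at hs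
    exact Simple.not_isZero _ (IsZero.of_mono_zero (simpleSubobject hK) (⨁ fun _ : ι => X))
  have := isIso_of_hom_simple hj
  have hw : inv (s ≫ biproduct.π _ j) ≫ s = 0 :=
    eq_zero_of_comp_biproduct_desc_eq_zero k hu (by simp [s])
  have hinv := IsIso.inv_hom_id (s ≫ biproduct.π _ j)
  rw [← Category.assoc, hw, zero_comp] at hinv
  exact id_nonzero X hinv.symm

end Simple

section Monoidal

variable {C : Type*} [Category C] [MonoidalCategory C]

theorem mono_whiskerRight_of_hasLeftDual {X Y : C} (f : X ⟶ Y) [Mono f] (D : C) [HasLeftDual D] :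
    Mono (f ▷ D) :=
  have := (tensorRightAdjunction (ᘁD) D).isRightAdjoint
  (tensorRight D).map_mono f

variable [Preadditive C] [MonoidalPreadditive C]

section Semiring

variable (k : Type*) [Semiring k] [Linear k C] [MonoidalLinear k C]

theorem MonoidalLinear.smul_tensor {A A' B D : C} (r : k) (f : A ⟶ A') (g : B ⟶ D) :
    (r • f) ⊗ₘ g = r • (f ⊗ₘ g) := by
  simp [MonoidalCategory.tensorHom_def]

theorem MonoidalLinear.tensor_smul {A A' B D : C} (r : k) (f : A ⟶ A') (g : B ⟶ D) :
    f ⊗ₘ (r • g) = r • (f ⊗ₘ g) := by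
  simp [MonoidalCategory.tensorHom_def]

end Semiring

variable (k : Type*) [CommSemiring k] [Linear k C] [MonoidalLinear k C]

def Linear.tensorHom (A A' B D : C) : (A ⟶ A') →ₗ[k] (B ⟶ D) →ₗ[k] (A ⊗ B ⟶ A' ⊗ D) :=
  LinearMap.mk₂ k (· ⊗ₘ ·) MonoidalPreadditive.add_tensor (MonoidalLinear.smul_tensor k)
    MonoidalPreadditive.tensor_add (MonoidalLinear.tensor_smul k)

@[simp]
theorem Linear.tensorHom_apply {A A' B D : C} (f : A ⟶ A') (g : B ⟶ D) :
    Linear.tensorHom k A A' B D f g = f ⊗ₘ g :=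
  rfl

end Monoidal

section Rigid

attribute [local instance] Abelian.hasFiniteBiproducts

variable (k : Type*) [Field k] [IsAlgClosed k] {C : Type*} [Category C] [Abelian C] [Linear k C]
  [MonoidalCategory C] [MonoidalPreadditive C] [∀ X : C, IsArtinianObject X]
  [Simple (𝟙_ C)] [FiniteDimensional k (𝟙_ C ⟶ 𝟙_ C)]

theorem eq_zero_of_sum_unit_tensorHom_eq_zero {ι : Type} [Fintype ι] {U B D : C} [HasLeftDual D]
    {u : ι → (𝟙_ C ⟶ U)} (hu : LinearIndependent k u) {g : ι → (B ⟶ D)}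
    (hsum : ∑ j, u j ⊗ₘ g j = 0) (j : ι) : g j = 0 := by
  have := mono_biproduct_desc_of_linearIndependent k hu
  have := mono_whiskerRight_of_hasLeftDual (biproduct.desc u) D
  let t := ∑ j, 𝟙_ C ◁ g j ≫ biproduct.ι (fun _ => 𝟙_ C) j ▷ D
  have ht : t = 0 := by
    refine zero_of_comp_mono (biproduct.desc u ▷ D) ?_
    rw [← hsum, Preadditive.sum_comp]
    refine Finset.sum_congr rfl fun j _ => ?_
    rw [Category.assoc, ← comp_whiskerRight, biproduct.ι_desc, tensorHom_def']
  have htj : t ≫ biproduct.π _ j ▷ D = 𝟙_ C ◁ g j := by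
    simp only [t, Preadditive.sum_comp, Category.assoc, ← comp_whiskerRight]
    rw [Finset.sum_eq_single j (fun i _ hij => by
      rw [biproduct.ι_π_ne _ hij, MonoidalPreadditive.zero_whiskerRight, comp_zero]) (by simp)]
    rw [biproduct.ι_π_self, id_whiskerRight, Category.comp_id]
  rw [ht, zero_comp, id_whiskerLeft] at htj
  simpa using htj.symm

variable [MonoidalLinear k C]

theorem eq_zero_of_sum_tensorHom_eq_zero {ι : Type} [Fintype ι] {A A' B D : C} [HasLeftDual A]
    [HasLeftDual D] {f : ι → (A ⟶ A')} (hf : LinearIndependent k f) {g : ι → (B ⟶ D)}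
    (hsum : ∑ j, f j ⊗ₘ g j = 0) (j : ι) : g j = 0 := by
  let L : (A ⟶ A') →ₗ[k] (𝟙_ C ⟶ (ᘁA) ⊗ A') :=
    Linear.leftComp k _ (η_ (ᘁA) A) ∘ₗ (tensorLeft (ᘁA)).mapLinearMap k
  have hL_apply (h : A ⟶ A') : L h = η_ (ᘁA) A ≫ (ᘁA) ◁ h := rfl
  have hL : Function.Injective L := fun x y hxy => by
    simpa [hL_apply] using congrArg (tensorLeftHomEquiv (𝟙_ C) (ᘁA) A A').symm hxy
  refine eq_zero_of_sum_unit_tensorHom_eq_zero k (hf.map' L (LinearMap.ker_eq_bot.2 hL)) ?_ j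
  have hform : ∀ j, L (f j) ⊗ₘ g j =
      η_ (ᘁA) A ▷ B ≫ (α_ _ _ _).hom ≫ (ᘁA) ◁ (f j ⊗ₘ g j) ≫ (α_ _ _ _).inv := fun j => by
    simp [hL_apply, MonoidalCategory.tensorHom_def]
  simp only [Function.comp_apply, hform, ← Preadditive.comp_sum, ← Preadditive.sum_comp,
    ← whiskerLeft_sum, hsum]
  simp

theorem Linear.tensorHom_lift_injective {A A' B D : C} [HasLeftDual A] [HasLeftDual D]
    [FiniteDimensional k (A ⟶ A')] :
    Function.Injective (TensorProduct.lift (Linear.tensorHom k A A' B D)) := by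
  let b := Module.finBasis k (A ⟶ A')
  refine (injective_iff_map_eq_zero _).2 fun t ht => ?_
  obtain ⟨c, rfl⟩ := TensorProduct.eq_repr_basis_left b t
  have hc : c = 0 := by
    ext j
    refine eq_zero_of_sum_tensorHom_eq_zero k b.linearIndependent ?_ j
    simpa [Finsupp.sum_fintype, MonoidalPreadditive.tensor_zero] using ht
  simp [hc]

theorem sum_dual_smul_eq_zero_of_sum_tensorHom_eq_zero {ι : Type*} {A A' B D : C} [HasLeftDual A]
    [HasLeftDual D] [FiniteDimensional k (A ⟶ A')] (s : Finset ι) (f : ι → (A ⟶ A'))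
    (g : ι → (B ⟶ D)) (hsum : ∑ i ∈ s, f i ⊗ₘ g i = 0) (φ : Module.Dual k (A ⟶ A')) :
    ∑ i ∈ s, φ (f i) • g i = 0 := by
  have ht : ∑ i ∈ s, f i ⊗ₜ[k] g i = 0 :=
    Linear.tensorHom_lift_injective k (by simpa using hsum)
  simpa using congrArg (TensorProduct.lift ((LinearMap.lsmul k (B ⟶ D)).comp φ)) ht

end Rigid

end CategoryTheory

namespace CategoryTheory.NatTrans

variable {C : Type*} [Category C] [MonoidalCategory C] {I : Type*} [Category I]
  [MonoidalCategory I] {F G : I ⥤ C} [F.LaxMonoidal] [G.Monoidal]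

theorem IsMonoidal.ne_zero [Preadditive C] (hC : ¬IsZero (𝟙_ C)) (τ : F ⟶ G) [τ.IsMonoidal] :
    τ ≠ 0 := by
  intro hτ
  have hε := IsMonoidal.unit (τ := τ)
  rw [hτ, app_zero, comp_zero] at hε
  refine hC (IsZero.iff_id_eq_zero _ |>.2 ?_)
  rw [← (Functor.Monoidal.εIso G).hom_inv_id, Functor.Monoidal.εIso_hom, ← hε, zero_comp]

theorem sum_smul_app_tensorHom_eq_zero (k : Type*) [Semiring k] [Preadditive C] [Linear k C]
    [MonoidalPreadditive C] [MonoidalLinear k C] {ι : Type*} (s : Finset ι) (τ : ι → (F ⟶ G))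
    (hτ : ∀ i, (τ i).IsMonoidal) (a : ι → k) (hrel : ∑ i ∈ s, a i • τ i = 0) (X Y : I) :
    ∑ i ∈ s, (a i • (τ i).app X) ⊗ₘ (τ i).app Y = 0 := by
  rw [← cancel_mono (Functor.LaxMonoidal.μ G X Y), zero_comp, Preadditive.sum_comp]
  simp only [MonoidalLinear.smul_tensor, Linear.smul_comp, ← (hτ _).tensor]
  have := congrArg (fun τ => Functor.LaxMonoidal.μ F X Y ≫ τ.app (X ⊗ Y)) hrel
  simpa [app_sum, Preadditive.comp_sum] using this

end CategoryTheory.NatTrans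

/-- Let `I` be a small monoidal category, `C` a tensor category over an
algebraically closed field `k`, and `F, G : I ⥤ C` strong monoidal functors. Then the set
of monoidal natural transformations `F ⟶ G` is a linearly independent subset of the
`k`-vector space of all natural transformations `F ⟶ G`. -/
theorem monoidalNatTrans_linearIndependent
    (k : Type*) [Field k] [IsAlgClosed k]
    {C : Type*} [Category C] [Abelian C] [Linear k C]
    [MonoidalCategory C] [MonoidalPreadditive C] [MonoidalLinear k C]
    [RigidCategory C] [Simple (𝟙_ C)]
    [∀ X : C, IsNoetherianObject X] [∀ X : C, IsArtinianObject X]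
    [∀ X Y : C, FiniteDimensional k (X ⟶ Y)]
    {I : Type*} [SmallCategory I] [MonoidalCategory I]
    (F G : I ⥤ C) [F.Monoidal] [G.Monoidal] :
    LinearIndependent k (fun g : {g : F ⟶ G // NatTrans.IsMonoidal g} => (g : F ⟶ G)) := by
  refine linearIndependent_of_mul_stable_relations _
    (fun (p : Σ X : I, Module.Dual k (F.obj X ⟶ G.obj X)) τ => p.2 (τ.app p.1)) ?_ ?_ ?_
  · intro τ
    have := τ.2
    exact NatTrans.IsMonoidal.ne_zero (Simple.not_isZero _) τ.1
  · refine fun τ τ' h => Subtype.ext <| NatTrans.ext <| funext fun X => sub_eq_zero.1 ?_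
    refine (Module.forall_dual_apply_eq_zero_iff k _).1 fun φ => ?_
    simpa [sub_eq_zero] using h ⟨X, φ⟩
  · rintro s a hrel ⟨X, φ⟩
    ext Y
    have := sum_dual_smul_eq_zero_of_sum_tensorHom_eq_zero k s _ _
      (NatTrans.sum_smul_app_tensorHom_eq_zero k s _ (fun τ => τ.2) a hrel X Y) φ
    simpa [NatTrans.app_sum, mul_smul] using this
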